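/- Let 𝔤 = 𝔤(𝔰, V, 𝔷, β) be the Spindler Lie algebra (bracket as above) where 𝔰 is semisimple, the 𝔰-module V satisfies span(𝔰.V) = V, z_{V}(𝔱_𝔰) = {0} for a Cartan subalgebra 𝔱_𝔰 of 𝔰 (no nonzero 𝔰-fixed vectors), and 𝔷 = span β(V, V). Let D be a derivation of 𝔤 with D({0} × {0} × 𝔰) = {0}. Then there exist D_V ∈ End_𝔰(V) and D_𝔷 ∈ End(𝔷) with D(v, z, x) = (D_V v, D_𝔷 z, 0) for all (v, z, x), and the pair (D_V, D_𝔷) satisfies D_𝔷 β(v,w) = β(D_V v, w) + β(v, D_V w). -/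

import Mathlib

/-!
Since `D` kills `𝔰`, it commutes with the `𝔰`-action, and it preserves the centre
`{0} × 𝔷 × {0}` (there are no other central elements, as `V` has no `𝔰`-fixed vectors and `𝔰`
has trivial centre). Write `D (v, 0, 0) = (D_V v, G v, F v)`: commuting with `𝔰` makes `F`
equivariant and kills `G` on `𝔰.V`, which spans `V`. Applying `D` to `[v, w] = β(v, w) ∈ 𝔷`
gives `F(v).w = F(w).v`, so `⁅F v, F w⁆ = F (F(v).w)` is symmetric, hence zero. The range of `F`
is therefore an abelian ideal of the semisimple `𝔰`, and `F = 0`.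
-/

attribute [local instance 100] LieRing.ofAssociativeRing

/-- The bracket of the Spindler Lie algebra `𝔤(𝔰, V, 𝔷, β)` on `V × 𝔷 × 𝔰`. -/
def spindlerBracket {s V Z : Type*} [LieRing s] [LieAlgebra ℝ s]
    [AddCommGroup V] [Module ℝ V] [AddCommGroup Z] [Module ℝ Z]
    (ρ : s →ₗ⁅ℝ⁆ Module.End ℝ V) (β : V →ₗ[ℝ] V →ₗ[ℝ] Z)
    (p q : V × Z × s) : V × Z × s :=
  (ρ p.2.2 q.1 - ρ q.2.2 p.1, β p.1 q.1, ⁅p.2.2, q.2.2⁆)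

namespace LieAlgebra

variable {K s V : Type*} [CommRing K] [LieRing s] [LieAlgebra K s] [HasTrivialRadical K s]
  [IsAddTorsionFree s] [AddCommGroup V] [Module K V]

theorem linearMap_eq_zero_of_map_act_of_act_symm {ρ : s →ₗ⁅K⁆ Module.End K V}
    {F : V →ₗ[K] s}
    (hF : ∀ x w, F (ρ x w) = ⁅x, F w⁆) (hsymm : ∀ v w, ρ (F v) w = ρ (F w) v) : F = 0 := by
  let I : LieIdeal K s :=
    { LinearMap.range F with
      lie_mem := by
        rintro x _ ⟨w, rfl⟩
        exact ⟨ρ x w, hF x w⟩ }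
  have hI : IsLieAbelian I := by
    constructor
    rintro ⟨-, v, rfl⟩ ⟨-, w, rfl⟩
    have hswap : ⁅F v, F w⁆ = ⁅F w, F v⁆ := by rw [← hF, ← hF, hsymm]
    ext
    exact self_eq_neg.mp (hswap.trans (lie_skew _ _).symm)
  have hIbot : I = ⊥ := (hasTrivialRadical_iff_no_abelian_ideals K s).mp inferInstance I hI
  ext v
  simpa [hIbot] using (show F v ∈ I from ⟨v, rfl⟩)

end LieAlgebra

def IsSpindlerDerivation {s V Z : Type*} [LieRing s] [LieAlgebra ℝ s]
    [AddCommGroup V] [Module ℝ V] [AddCommGroup Z] [Module ℝ Z]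
    (ρ : s →ₗ⁅ℝ⁆ Module.End ℝ V) (β : V →ₗ[ℝ] V →ₗ[ℝ] Z)
    (D : (V × Z × s) →ₗ[ℝ] V × Z × s) : Prop :=
  ∀ p q, D (spindlerBracket ρ β p q) =
    spindlerBracket ρ β (D p) q + spindlerBracket ρ β p (D q)

section Spindler

variable {s V Z : Type*} [LieRing s] [LieAlgebra ℝ s]
  [AddCommGroup V] [Module ℝ V] [AddCommGroup Z] [Module ℝ Z]
  {ρ : s →ₗ⁅ℝ⁆ Module.End ℝ V} {β : V →ₗ[ℝ] V →ₗ[ℝ] Z}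
  {D : (V × Z × s) →ₗ[ℝ] V × Z × s}

@[simp]
theorem spindlerBracket_center_left (z : Z) (q : V × Z × s) :
    spindlerBracket ρ β (0, z, 0) q = 0 := by
  simp [spindlerBracket, Prod.ext_iff]

theorem eq_center_of_spindlerBracket_s_eq_zero [LieModule.IsFaithful ℝ s s]
    (hfix : ∀ v : V, (∀ x : s, ρ x v = 0) → v = 0) {p : V × Z × s}
    (hp : ∀ y : s, spindlerBracket ρ β p (0, 0, y) = 0) : p = (0, p.2.1, 0) := by
  have hact (y : s) : ρ y p.1 = 0 ∧ ⁅p.2.2, y⁆ = 0 := by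
    simpa [spindlerBracket, Prod.ext_iff] using hp y
  have hcenter : p.2.2 ∈ LieAlgebra.center ℝ s := by
    rw [LieModule.mem_maxTrivSubmodule]
    intro y
    rw [← lie_skew, (hact y).2, neg_zero]
  rw [LieAlgebra.center_eq_bot] at hcenter
  exact Prod.ext (hfix _ fun y => (hact y).1) (Prod.ext rfl hcenter)

namespace IsSpindlerDerivation

theorem apply_center [LieModule.IsFaithful ℝ s s] (hD : IsSpindlerDerivation ρ β D)
    (hfix : ∀ v : V, (∀ x : s, ρ x v = 0) → v = 0) (z : Z) :
    D (0, z, 0) = (0, (D (0, z, 0)).2.1, 0) := by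
  refine eq_center_of_spindlerBracket_s_eq_zero (β := β) hfix fun y => ?_
  simpa using (hD (0, z, 0) (0, 0, y)).symm

theorem apply_act (hD : IsSpindlerDerivation ρ β D) (hann : ∀ x : s, D (0, 0, x) = 0)
    (x : s) (w : V) :
    D (ρ x w, 0, 0) = (ρ x (D (w, 0, 0)).1, 0, ⁅x, (D (w, 0, 0)).2.2⁆) := by
  simpa [spindlerBracket, hann] using hD (0, 0, x) (w, 0, 0)

theorem apply_beta (hD : IsSpindlerDerivation ρ β D) (v w : V) :
    D (0, β v w, 0) = (ρ (D (v, 0, 0)).2.2 w - ρ (D (w, 0, 0)).2.2 v,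
      β (D (v, 0, 0)).1 w + β v (D (w, 0, 0)).1, 0) := by
  simpa [spindlerBracket, Prod.ext_iff, sub_eq_add_neg] using hD (v, 0, 0) (w, 0, 0)

theorem apply_inl [LieAlgebra.HasTrivialRadical ℝ s] (hD : IsSpindlerDerivation ρ β D)
    (hann : ∀ x : s, D (0, 0, x) = 0) (hfix : ∀ v : V, (∀ x : s, ρ x v = 0) → v = 0)
    (hVspan : Submodule.span ℝ {v : V | ∃ (x : s) (w : V), v = ρ x w} = ⊤) (v : V) :
    D (v, 0, 0) = ((D (v, 0, 0)).1, 0, 0) := by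
  let F : V →ₗ[ℝ] s :=
    (LinearMap.snd ℝ Z s ∘ₗ LinearMap.snd ℝ V (Z × s)) ∘ₗ D ∘ₗ LinearMap.inl ℝ V (Z × s)
  let G : V →ₗ[ℝ] Z :=
    (LinearMap.fst ℝ Z s ∘ₗ LinearMap.snd ℝ V (Z × s)) ∘ₗ D ∘ₗ LinearMap.inl ℝ V (Z × s)
  have : IsAddTorsionFree s := .of_isTorsionFree ℝ s
  have hF : F = 0 := by
    refine LieAlgebra.linearMap_eq_zero_of_map_act_of_act_symm (ρ := ρ)
      (fun x w => congrArg (·.2.2) (hD.apply_act hann x w)) fun u w => ?_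
    have hcentral := (hD.apply_beta u w).symm.trans (hD.apply_center hfix (β u w))
    exact sub_eq_zero.mp (congrArg Prod.fst hcentral)
  have hG : G = 0 := by
    refine LinearMap.ext_on hVspan ?_
    rintro _ ⟨x, w, rfl⟩
    exact congrArg (·.2.1) (hD.apply_act hann x w)
  exact Prod.ext rfl (Prod.ext (LinearMap.congr_fun hG v) (LinearMap.congr_fun hF v))

theorem apply_eq [LieAlgebra.HasTrivialRadical ℝ s] (hD : IsSpindlerDerivation ρ β D)
    (hann : ∀ x : s, D (0, 0, x) = 0) (hfix : ∀ v : V, (∀ x : s, ρ x v = 0) → v = 0)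
    (hVspan : Submodule.span ℝ {v : V | ∃ (x : s) (w : V), v = ρ x w} = ⊤)
    (v : V) (z : Z) (x : s) :
    D (v, z, x) = ((D (v, 0, 0)).1, (D (0, z, 0)).2.1, 0) := by
  have hsplit : ((v, z, x) : V × Z × s) = (v, 0, 0) + (0, z, 0) + (0, 0, x) := by simp
  rw [hsplit, map_add, map_add, hann, hD.apply_inl hann hfix hVspan, hD.apply_center hfix]
  simp

end IsSpindlerDerivation

end Spindler

theorem spindler_derivation_annihilating_s_form_general
    (s V Z : Type*) [LieRing s] [LieAlgebra ℝ s] [LieAlgebra.IsSemisimple ℝ s]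
    [AddCommGroup V] [Module ℝ V] [AddCommGroup Z] [Module ℝ Z]
    (ρ : s →ₗ⁅ℝ⁆ Module.End ℝ V)
    (β : V →ₗ[ℝ] V →ₗ[ℝ] Z)
    (ts : LieSubalgebra ℝ s)
    (hfix : ∀ v : V, (∀ x ∈ ts, ρ x v = 0) → v = 0)
    (hVspan : Submodule.span ℝ {v : V | ∃ (x : s) (w : V), v = ρ x w} = ⊤)
    (D : (V × Z × s) →ₗ[ℝ] V × Z × s)
    (hD : ∀ p q : V × Z × s,
      D (spindlerBracket ρ β p q) =
        spindlerBracket ρ β (D p) q + spindlerBracket ρ β p (D q))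
    (hann : ∀ x : s, D ((0 : V), (0 : Z), x) = 0) :
    ∃ (DV : V →ₗ[ℝ] V) (DZ : Z →ₗ[ℝ] Z),
      (∀ x : s, DV ∘ₗ ρ x = ρ x ∘ₗ DV) ∧
      (∀ (v : V) (z : Z) (x : s), D (v, z, x) = (DV v, DZ z, (0 : s))) ∧
      (∀ v w : V, DZ (β v w) = β (DV v) w + β v (DV w)) := by
  have hD : IsSpindlerDerivation ρ β D := hD
  have hfix' : ∀ v : V, (∀ x : s, ρ x v = 0) → v = 0 := fun v hv => hfix v fun x _ => hv x
  refine ⟨LinearMap.fst ℝ V (Z × s) ∘ₗ D ∘ₗ LinearMap.inl ℝ V (Z × s),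
    (LinearMap.fst ℝ Z s ∘ₗ LinearMap.snd ℝ V (Z × s)) ∘ₗ D ∘ₗ
      LinearMap.inr ℝ V (Z × s) ∘ₗ LinearMap.inl ℝ Z s,
    fun x => LinearMap.ext fun w => congrArg Prod.fst (hD.apply_act hann x w),
    hD.apply_eq hann hfix' hVspan, fun v w => congrArg (·.2.1) (hD.apply_beta v w)⟩

/-- Let `𝔤 = 𝔤(𝔰, V, 𝔷, β)` with `𝔰` semisimple, `span(𝔰.V) = V`,
`z_V(𝔱_𝔰) = {0}` for a Cartan subalgebra `𝔱_𝔰 ⊆ 𝔰`, and `𝔷 = span β(V, V)`.  Every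
derivation `D` of `𝔤` annihilating `{0} × {0} × 𝔰` is of the form
`D(v, z, x) = (D_V v, D_𝔷 z, 0)` with `D_V ∈ End_𝔰(V)` and `(D_V, D_𝔷)` β-compatible. -/
theorem spindler_derivation_annihilating_s_form
    (s V Z : Type*) [LieRing s] [LieAlgebra ℝ s] [LieAlgebra.IsSemisimple ℝ s]
    [AddCommGroup V] [Module ℝ V] [AddCommGroup Z] [Module ℝ Z]
    (ρ : s →ₗ⁅ℝ⁆ Module.End ℝ V)
    (β : V →ₗ[ℝ] V →ₗ[ℝ] Z)
    (hβskew : ∀ v w : V, β v w = - β w v)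
    (hβinv : ∀ (x : s) (v w : V), β (ρ x v) w + β v (ρ x w) = 0)
    (ts : LieSubalgebra ℝ s) [ts.IsCartanSubalgebra]
    (hfix : ∀ v : V, (∀ x ∈ ts, ρ x v = 0) → v = 0)
    (hVspan : Submodule.span ℝ {v : V | ∃ (x : s) (w : V), v = ρ x w} = ⊤)
    (hZspan : Submodule.span ℝ {z : Z | ∃ v w : V, z = β v w} = ⊤)
    (D : (V × Z × s) →ₗ[ℝ] V × Z × s)
    (hD : ∀ p q : V × Z × s,
      D (spindlerBracket ρ β p q) =
        spindlerBracket ρ β (D p) q + spindlerBracket ρ β p (D q))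
    (hann : ∀ x : s, D ((0 : V), (0 : Z), x) = 0) :
    ∃ (DV : V →ₗ[ℝ] V) (DZ : Z →ₗ[ℝ] Z),
      (∀ x : s, DV ∘ₗ ρ x = ρ x ∘ₗ DV) ∧
      (∀ (v : V) (z : Z) (x : s), D (v, z, x) = (DV v, DZ z, (0 : s))) ∧
      (∀ v w : V, DZ (β v w) = β (DV v) w + β v (DV w)) :=
  spindler_derivation_annihilating_s_form_general s V Z ρ β ts hfix hVspan D hD hann
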